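/- Let G be a finite simple graph on n vertices that is not complete, let k = χ(G) be its chromatic number, and let p be a positive integer. For every integer t with 1 ≤ t ≤ k + p: if α_t^{DP}(G ∨ K_p) ≥ t(n+p)/(k+p), then α_t^{DP}(G ∨ K_{p+1}) ≥ t(n+p+1)/(k+p+1). (Equivalently, with B_q denoting the set of t ∈ {1,…,k+q} for which α_t^{DP}(G ∨ K_q) < t(n+q)/(k+q), one has B_{p+1} ⊆ B_p.) -/

import Mathlib

open SimpleGraph

/-- `DPCover G H L` means `(L, H)` is a cover of the graph `G`:
(1) the sets `L u` partition `V(H)`; (2) each `H[L u]` is complete;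
(3) for each edge `uv` of `G`, the edges of `H` between `L u` and `L v` form a matching;
(4) there are no edges of `H` between lists of distinct non-adjacent vertices. -/
structure DPCover {V : Type} (G : SimpleGraph V) {W : Type} (H : SimpleGraph W)
    (L : V → Finset W) : Prop where
  partition : ∀ w : W, ∃! v : V, w ∈ L v
  cliques : ∀ v : V, ∀ a ∈ L v, ∀ b ∈ L v, a ≠ b → H.Adj a b
  matching : ∀ ⦃u v : V⦄, G.Adj u v → ∀ a ∈ L u, ∀ b ∈ L v, ∀ b' ∈ L v,
      H.Adj a b → H.Adj a b' → b = b'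
  nonadj : ∀ ⦃u v : V⦄, u ≠ v → ¬ G.Adj u v → ∀ a ∈ L u, ∀ b ∈ L v, ¬ H.Adj a b

/-- A finset is independent in `H` if no two of its elements are adjacent. -/
def IsIndepFinset {W : Type} (H : SimpleGraph W) (S : Finset W) : Prop :=
  ∀ a ∈ S, ∀ b ∈ S, ¬ H.Adj a b

/-- The independence number of `H`. -/
noncomputable def indepNum {W : Type} [Fintype W] (H : SimpleGraph W) : ℕ :=
  sSup {n : ℕ | ∃ S : Finset W, IsIndepFinset H S ∧ S.card = n}

/-- The DP-chromatic number of `G`: the least `m` such that every `m`-fold cover `(L, H)`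
of `G` admits an `H`-coloring, i.e. an independent set in `H` of size `|V(G)|`. -/
noncomputable def chiDP {V : Type} [Fintype V] (G : SimpleGraph V) : ℕ :=
  sInf {m : ℕ | ∀ (W : Type) (_ : Fintype W) (H : SimpleGraph W) (L : V → Finset W),
    DPCover G H L → (∀ v, (L v).card = m) →
    ∃ S : Finset W, IsIndepFinset H S ∧ S.card = Fintype.card V}

/-- The partial DP `t`-chromatic number of `G`: the minimum of the independence number
`α(H)` over all `t`-fold covers `(L, H)` of `G`. -/
noncomputable def alphaDP {V : Type} [Fintype V] (G : SimpleGraph V) (t : ℕ) : ℕ :=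
  sInf {n : ℕ | ∃ (W : Type) (_ : Fintype W) (H : SimpleGraph W) (L : V → Finset W),
    DPCover G H L ∧ (∀ v, (L v).card = t) ∧ _root_.indepNum H = n}

/-- A graph `G` is partially DP-nice if `α_t^{DP}(G) ≥ t|V(G)|/χ_DP(G)` for all
`t ∈ {1, …, χ_DP(G)}`. -/
def PartiallyDPNice {V : Type} [Fintype V] (G : SimpleGraph V) : Prop :=
  ∀ t : ℕ, 1 ≤ t → t ≤ chiDP G →
    (t * Fintype.card V : ℚ) / (chiDP G : ℚ) ≤ (alphaDP G t : ℚ)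

/-- The join `G ∨ K_p` of `G` with the complete graph `K_p`: disjoint copies of `G` and
`K_p` together with all edges between them. -/
def joinComplete {V : Type} (G : SimpleGraph V) (p : ℕ) : SimpleGraph (V ⊕ Fin p) where
  Adj x y :=
    match x, y with
    | .inl a, .inl b => G.Adj a b
    | .inr a, .inr b => a ≠ b
    | .inl _, .inr _ => True
    | .inr _, .inl _ => True
  symm := by
    constructor
    rintro (a | a) (b | b) h
    · exact G.symm.symm _ _ h
    · trivial
    · trivial
    · exact Ne.symm h
  loopless := by
    constructor
    rintro (a | a) h
    · exact G.loopless.irrefl a h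
    · exact h rfl

/-- The chromatic number of a graph: the least `n` such that `G` is `n`-colorable. -/
noncomputable def chromNum {V : Type} (G : SimpleGraph V) : ℕ :=
  sInf {n : ℕ | G.Colorable n}

/-!
Restricting a `t`-fold cover to an induced subgraph gives a `t`-fold cover whose cover graph
is an induced subgraph of the original one, so `α_t^{DP}` is monotone under induced subgraphs;
as `G ∨ K_p` is induced in `G ∨ K_{p+1}`, `α_t^{DP}(G ∨ K_p) ≤ α_t^{DP}(G ∨ K_{p+1})`. On the
other side, since `χ(G) ≤ |V(G)|`, the bound `t(n+q)/(k+q)` does not increase with `q`.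
-/

variable {V V' W W' : Type}

theorem IsIndepFinset.card_le_indepNum [Fintype W] {H : SimpleGraph W} {S : Finset W}
    (hS : IsIndepFinset H S) : S.card ≤ _root_.indepNum H :=
  le_csSup ⟨Fintype.card W, by rintro _ ⟨T, -, rfl⟩; exact T.card_le_univ⟩ ⟨S, hS, rfl⟩

theorem indepNum_comap_le [Fintype W] [Fintype W'] (H : SimpleGraph W) (f : W' ↪ W) :
    _root_.indepNum (H.comap f) ≤ _root_.indepNum H := by
  refine csSup_le ⟨0, ∅, by simp [IsIndepFinset], rfl⟩ ?_
  rintro _ ⟨S, hS, rfl⟩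
  rw [← S.card_map f]
  refine IsIndepFinset.card_le_indepNum ?_
  simpa [IsIndepFinset] using hS

/-- `⊥ □ K_t` is the disjoint union of copies of `K_t`, one list per vertex, with no cross edges. -/
theorem dpCover_boxProd_bot_top (G : SimpleGraph V) (t : ℕ) :
    DPCover G ((⊥ : SimpleGraph V) □ (⊤ : SimpleGraph (Fin t))) fun v => {v} ×ˢ Finset.univ where
  partition w :=
    ⟨w.1, by simp, fun v hv => (Finset.mem_singleton.1 (Finset.mem_product.1 hv).1).symm⟩
  cliques v a ha b hb hab := by
    simp only [Finset.mem_product, Finset.mem_singleton] at ha hb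
    simp only [boxProd_adj, bot_adj, false_and, top_adj, false_or, ha.1, hb.1, and_true]
    exact fun h => hab (Prod.ext (ha.1.trans hb.1.symm) h)
  matching u v huv a ha b hb b' hb' hab _ := by
    simp only [Finset.mem_product, Finset.mem_singleton] at ha hb
    simp only [boxProd_adj, bot_adj, false_and, false_or, ha.1, hb.1] at hab
    exact absurd hab.2 huv.ne
  nonadj u v huv _ a ha b hb hab := by
    simp only [Finset.mem_product, Finset.mem_singleton] at ha hb
    simp only [boxProd_adj, bot_adj, false_and, false_or, ha.1, hb.1] at hab
    exact huv hab.2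

theorem exists_dpCover_indepNum_eq_alphaDP [Fintype V] (G : SimpleGraph V) (t : ℕ) :
    ∃ (W : Type) (_ : Fintype W) (H : SimpleGraph W) (L : V → Finset W),
      DPCover G H L ∧ (∀ v, (L v).card = t) ∧ _root_.indepNum H = alphaDP G t :=
  Nat.sInf_mem (s := {n | ∃ (W : Type) (_ : Fintype W) (H : SimpleGraph W) (L : V → Finset W),
      DPCover G H L ∧ (∀ v, (L v).card = t) ∧ _root_.indepNum H = n})
    ⟨_, V × Fin t, inferInstance, _, _, dpCover_boxProd_bot_top G t, fun v => by simp, rfl⟩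

theorem DPCover.induce {G : SimpleGraph V} {G' : SimpleGraph V'} {H : SimpleGraph W}
    {L : V' → Finset W} (hL : DPCover G' H L) (f : G ↪g G')
    [DecidablePred (· ∈ {w | ∃ v, w ∈ L (f v)})] :
    DPCover G (H.induce {w | ∃ v, w ∈ L (f v)})
      fun v => (L (f v)).subtype (· ∈ {w | ∃ v, w ∈ L (f v)}) where
  partition w := by
    obtain ⟨v, hv⟩ : ∃ v, (w : W) ∈ L (f v) := w.2
    refine ⟨v, Finset.mem_subtype.2 hv, fun u hu => f.injective ?_⟩
    exact (hL.partition w).unique (Finset.mem_subtype.1 hu) hv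
  cliques v a ha b hb hab :=
    hL.cliques (f v) a (Finset.mem_subtype.1 ha) b (Finset.mem_subtype.1 hb)
      (Subtype.coe_ne_coe.2 hab)
  matching u v huv a ha b hb b' hb' hab hab' :=
    Subtype.ext <| hL.matching (f.map_adj_iff.2 huv) a (Finset.mem_subtype.1 ha)
      b (Finset.mem_subtype.1 hb) b' (Finset.mem_subtype.1 hb') hab hab'
  nonadj u v huv hnadj a ha b hb :=
    hL.nonadj (f.injective.ne huv) (mt f.map_adj_iff.1 hnadj) a (Finset.mem_subtype.1 ha)
      b (Finset.mem_subtype.1 hb)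

theorem alphaDP_le_of_embedding [Fintype V] [Fintype V'] {G : SimpleGraph V}
    {G' : SimpleGraph V'} (f : G ↪g G') (t : ℕ) : alphaDP G t ≤ alphaDP G' t := by
  classical
  obtain ⟨W, _, H, L, hL, hcard, hα⟩ := exists_dpCover_indepNum_eq_alphaDP G' t
  have hcard' (v : V) : ((L (f v)).subtype (· ∈ {w | ∃ v, w ∈ L (f v)})).card = t := by
    rw [Finset.card_subtype, Finset.filter_true_of_mem fun w hw => ⟨v, hw⟩, hcard]
  calc alphaDP G t ≤ _root_.indepNum (H.induce {w | ∃ v, w ∈ L (f v)}) :=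
        Nat.sInf_le ⟨_, inferInstance, _, _, hL.induce f, hcard', rfl⟩
    _ ≤ _root_.indepNum H := indepNum_comap_le H _
    _ = alphaDP G' t := hα

def joinCompleteEmbeddingSucc (G : SimpleGraph V) (p : ℕ) :
    joinComplete G p ↪g joinComplete G (p + 1) where
  toFun := Sum.map id Fin.castSucc
  inj' := Function.injective_id.sumMap (Fin.castSucc_injective p)
  map_rel_iff' := by
    rintro (a | a) (b | b)
    all_goals simp [joinComplete]

theorem add_one_div_add_one_le_div {K : Type*} [Field K] [LinearOrder K] [IsStrictOrderedRing K]
    {x y : K} (hy : 0 < y) (hyx : y ≤ x) : (x + 1) / (y + 1) ≤ x / y := by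
  rw [div_le_div_iff₀ (by linarith) hy]
  linarith

theorem alphaDP_joinComplete_mono_general {V : Type} [Fintype V] (G : SimpleGraph V)
    (p : ℕ) (hp : 0 < p) (t : ℕ)
    (h : ((t * (Fintype.card V + p) : ℕ) : ℚ) / ((chromNum G + p : ℕ) : ℚ) ≤
      (alphaDP (joinComplete G p) t : ℚ)) :
    ((t * (Fintype.card V + p + 1) : ℕ) : ℚ) / ((chromNum G + p + 1 : ℕ) : ℚ) ≤
      (alphaDP (joinComplete G (p + 1)) t : ℚ) := by
  have hk : chromNum G ≤ Fintype.card V := Nat.sInf_le G.colorable_of_fintype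
  have hratio : ((Fintype.card V + p + 1 : ℕ) : ℚ) / ((chromNum G + p + 1 : ℕ) : ℚ) ≤
      ((Fintype.card V + p : ℕ) : ℚ) / ((chromNum G + p : ℕ) : ℚ) := by
    rw [Nat.cast_add_one, Nat.cast_add_one]
    exact add_one_div_add_one_le_div (Nat.cast_pos.2 (by omega)) (Nat.cast_le.2 (by omega))
  rw [Nat.cast_mul, mul_div_assoc] at h ⊢
  calc _ ≤ _ := mul_le_mul_of_nonneg_left hratio t.cast_nonneg
    _ ≤ _ := h
    _ ≤ _ := by exact_mod_cast alphaDP_le_of_embedding (joinCompleteEmbeddingSucc G p) t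

/-- For a non-complete graph `G` on `n` vertices with `k = χ(G)`, and a positive
integer `p`: for every `t ∈ {1, …, k + p}`, if `α_t^{DP}(G ∨ K_p) ≥ t(n+p)/(k+p)`,
then `α_t^{DP}(G ∨ K_{p+1}) ≥ t(n+p+1)/(k+p+1)`; i.e. `B_{p+1} ⊆ B_p`. -/
theorem alphaDP_joinComplete_mono {V : Type} [Fintype V] (G : SimpleGraph V)
    (hnoncomplete : ∃ u v : V, u ≠ v ∧ ¬ G.Adj u v)
    (p : ℕ) (hp : 0 < p) (t : ℕ) (ht1 : 1 ≤ t) (ht2 : t ≤ chromNum G + p)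
    (h : ((t * (Fintype.card V + p) : ℕ) : ℚ) / ((chromNum G + p : ℕ) : ℚ) ≤
      (alphaDP (joinComplete G p) t : ℚ)) :
    ((t * (Fintype.card V + p + 1) : ℕ) : ℚ) / ((chromNum G + p + 1 : ℕ) : ℚ) ≤
      (alphaDP (joinComplete G (p + 1)) t : ℚ) :=
  alphaDP_joinComplete_mono_general G p hp t h
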